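/- Fix integers n ≥ 2, m ≥ 1 and a real Λ > 0. For every δ > 0 there exists ε > 0 with the following property. Let a = (a_{αi}) be a real m × n matrix whose singular values λ₁ ≥ λ₂ ≥ ⋯ ≥ λₙ ≥ 0 (so λᵢ² are the eigenvalues of aᵀa) satisfy λ₁λ₂ ≤ Λ. Let b = (b_{ij}) be the n × n matrix b_{ij} = δ_{ij} + Σ_{α=1}^m a_{αi} a_{αj}, let (b^{ij}) be its inverse (which exists since det b ≥ 1), and define ξ_{αj} = √(det b) · Σ_{i=1}^n b^{ij} a_{αi}. If a_{11} ≥ (1 − ε)√(det b), then |ξ_{11}| ≤ 1 + δ. -/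

import Mathlib

/-!
Diagonalise `aᵀa = U diag(γ) Uᵀ`. Then `b` and `b⁻¹` are functions of `aᵀa`, `det b = ∏ (1 + γⱼ)`,
and with the weights `wⱼ = U₁ⱼ²` (which sum to `1`) we get `a₁₁² ≤ (aᵀa)₁₁ = Σ γⱼ wⱼ` and, since
`Σᵢ b^{i1} a_{1i} = (a b⁻¹)₁₁` is one entry of a column of `a b⁻¹`,
`ξ₁₁² ≤ det b · (b⁻¹ aᵀa b⁻¹)₁₁ = det b · Σ wⱼ γⱼ / (1 + γⱼ)²`.
The hypothesis `a₁₁ ≥ (1 - ε)√(det b)` forces the largest `γ` to be of order `1/ε`; the bound on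
pairwise products makes all other `γⱼ` of order `Λ²ε`, and almost all the weight has to sit on the
largest eigenvalue. Every contribution beyond the leading `1` is then `O(ε (1 + Λ²))`.
-/

noncomputable section

/-- The singular values of a real `N × n` matrix: square roots of the eigenvalues of `AᵀA`. -/
def singVals {N n : ℕ} (A : Matrix (Fin N) (Fin n) ℝ) : Fin n → ℝ :=
  fun i => Real.sqrt ((Matrix.posSemidef_conjTranspose_mul_self A).1.eigenvalues i)

/-- The matrix `b_{ij} = δ_{ij} + Σ_α a_{αi} a_{αj}`. -/
def bMat {N n : ℕ} (a : Matrix (Fin N) (Fin n) ℝ) : Matrix (Fin n) (Fin n) ℝ :=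
  fun i j => (if i = j then (1 : ℝ) else 0) + ∑ α : Fin N, a α i * a α j

open Finset Matrix

/-- `g` is the largest eigenvalue, `P` the product of the other factors `1 + γᵢ`, and `q`, `r` the
total weight and the contribution `Σ γᵢ wᵢ` of the other eigenvalues. -/
theorem bound_of_dominant_split {L t δ g P q r : ℝ} (hL : 0 ≤ L) (ht : 0 < t)
    (htL : 50 * t * (1 + L) ≤ 1) (htδ : 50 * t * (1 + L) ≤ δ) (hg : 0 ≤ g) (hP : 1 ≤ P)
    (hr : 0 ≤ r) (hrg : r ≤ g * q) (hrL : r * g ≤ L * q)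
    (hdom : (1 - t) * ((1 + g) * P) ≤ g * (1 - q) + r) :
    P * (1 - q + (1 + g) * r) ≤ 1 + δ := by
  have ht50 : t ≤ 1 / 50 := by nlinarith
  have hdomP : (1 - t) * (1 + g) ≤ (1 - t) * ((1 + g) * P) := by
    nlinarith [mul_nonneg (by nlinarith : 0 ≤ (1 - t) * (1 + g)) (by linarith : 0 ≤ P - 1)]
  have hgt : 1 - t ≤ t * g := by nlinarith
  have hg49 : 49 * (1 + L) ≤ g := by nlinarith [mul_le_mul_of_nonneg_left htL hg]
  have hPt : (1 - t) * P ≤ 1 := by nlinarith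
  have hr49 : 49 * r ≤ q := by nlinarith [mul_le_mul_of_nonneg_left hg49 hr]
  have hqg : q * (g - 1 / 49) ≤ t * (1 + g) := by nlinarith
  have hq2 : q ≤ 2 * t := by nlinarith
  have hgr : (1 + g) * r ≤ 2 * L * q := by nlinarith
  have hbracket : 1 - q + (1 + g) * r ≤ 1 + 4 * L * t := by nlinarith
  have hfinal : 1 + 4 * L * t ≤ (1 - t) * (1 + δ) := by nlinarith
  calc P * (1 - q + (1 + g) * r) ≤ P * (1 + 4 * L * t) := by gcongr
    _ ≤ P * ((1 - t) * (1 + δ)) := by gcongr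
    _ ≤ 1 + δ := by nlinarith

theorem prod_one_add_mul_sum_div_sq_le {ι : Type*} [Fintype ι] {γ w : ι → ℝ} {L t δ : ℝ}
    (hL : 0 ≤ L) (ht : 0 < t) (htL : 50 * t * (1 + L) ≤ 1) (htδ : 50 * t * (1 + L) ≤ δ)
    (hγ : ∀ i, 0 ≤ γ i) (hw : ∀ i, 0 ≤ w i) (hw1 : ∑ i, w i = 1)
    (hpair : ∀ i j, i ≠ j → γ i * γ j ≤ L)
    (hdom : (1 - t) * ∏ i, (1 + γ i) ≤ ∑ i, γ i * w i) :
    (∏ i, (1 + γ i)) * ∑ i, γ i / (1 + γ i) ^ 2 * w i ≤ 1 + δ := by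
  classical
  obtain ⟨i₀, -, hmax⟩ := exists_max_image univ γ
    (nonempty_of_sum_ne_zero (by rw [hw1]; exact one_ne_zero))
  set s := univ.erase i₀
  set g := γ i₀
  set P := ∏ i ∈ s, (1 + γ i)
  set q := ∑ i ∈ s, w i
  set r := ∑ i ∈ s, γ i * w i
  have hprod : ∏ i, (1 + γ i) = (1 + g) * P := (mul_prod_erase univ _ (mem_univ i₀)).symm
  have hw₀ : w i₀ = 1 - q := by
    rw [← hw1, ← add_sum_erase univ w (mem_univ i₀)]; ring
  have hsum : ∑ i, γ i * w i = g * (1 - q) + r := by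
    rw [← add_sum_erase univ _ (mem_univ i₀), hw₀]
  have hg : 0 ≤ g := hγ i₀
  have hP : 1 ≤ P := one_le_prod fun i _ => le_add_of_nonneg_right (hγ i)
  have hr : 0 ≤ r := sum_nonneg fun i _ => mul_nonneg (hγ i) (hw i)
  have hrg : r ≤ g * q := by
    rw [mul_sum]
    exact sum_le_sum fun i _ => mul_le_mul_of_nonneg_right (hmax i (mem_univ i)) (hw i)
  have hrL : r * g ≤ L * q := by
    rw [sum_mul, mul_sum]
    refine sum_le_sum fun i hi => ?_
    nlinarith [hpair i i₀ (ne_of_mem_erase hi), hw i]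
  have htail : ∑ i ∈ s, γ i / (1 + γ i) ^ 2 * w i ≤ r := by
    refine sum_le_sum fun i _ => mul_le_mul_of_nonneg_right ?_ (hw i)
    exact div_le_self (hγ i) (one_le_pow₀ (le_add_of_nonneg_right (hγ i)))
  calc (∏ i, (1 + γ i)) * ∑ i, γ i / (1 + γ i) ^ 2 * w i
      = (1 + g) * P * (g / (1 + g) ^ 2 * (1 - q) + ∑ i ∈ s, γ i / (1 + γ i) ^ 2 * w i) := by
        rw [hprod, ← add_sum_erase univ _ (mem_univ i₀), hw₀]
    _ ≤ (1 + g) * P * (g / (1 + g) ^ 2 * (1 - q) + r) := by gcongr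
    _ = P * (g / (1 + g) * (1 - q) + (1 + g) * r) := by field_simp
    _ ≤ P * (1 - q + (1 + g) * r) := by
        gcongr
        exact mul_le_of_le_one_left (hw₀ ▸ hw i₀) ((div_le_one (by positivity)).2 (by linarith))
    _ ≤ 1 + δ :=
        bound_of_dominant_split hL ht htL htδ hg hP hr hrg hrL (by rwa [← hprod, ← hsum])

namespace Matrix.IsHermitian

variable {ι 𝕜 : Type*} [Fintype ι] [DecidableEq ι] [RCLike 𝕜] {A : Matrix ι ι 𝕜}
  (hA : A.IsHermitian)

lemma cfc_congr {f g : ℝ → ℝ} (h : ∀ i, f (hA.eigenvalues i) = g (hA.eigenvalues i)) :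
    hA.cfc f = hA.cfc g := by
  simp only [IsHermitian.cfc, Function.comp_def, h]

lemma cfc_id : hA.cfc id = A := hA.spectral_theorem.symm

lemma cfc_one : hA.cfc 1 = 1 := by
  simp [IsHermitian.cfc, Function.comp_def, -Unitary.conjStarAlgAut_apply]

lemma cfc_add (f g : ℝ → ℝ) : hA.cfc (f + g) = hA.cfc f + hA.cfc g := by
  simp [IsHermitian.cfc, Function.comp_def, ← map_add, -Unitary.conjStarAlgAut_apply]

lemma cfc_mul (f g : ℝ → ℝ) : hA.cfc (f * g) = hA.cfc f * hA.cfc g := by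
  simp [IsHermitian.cfc, Function.comp_def, ← map_mul, -Unitary.conjStarAlgAut_apply]

lemma isHermitian_cfc (f : ℝ → ℝ) : (hA.cfc f).IsHermitian :=
  hA.cfc_eq f ▸ cfc_predicate f A

lemma det_cfc (f : ℝ → ℝ) : (hA.cfc f).det = ∏ i, (f (hA.eigenvalues i) : 𝕜) := by
  simp [IsHermitian.cfc, -Unitary.conjStarAlgAut_apply]

lemma inv_cfc {f : ℝ → ℝ} (hf : ∀ i, f (hA.eigenvalues i) ≠ 0) :
    (hA.cfc f)⁻¹ = hA.cfc f⁻¹ := by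
  refine inv_eq_right_inv ?_
  rw [← cfc_mul, ← hA.cfc_one]
  exact hA.cfc_congr fun i => by simp [hf i]

lemma cfc_apply_self (f : ℝ → ℝ) (i : ι) :
    hA.cfc f i i =
      ∑ j, (f (hA.eigenvalues j) * ‖(hA.eigenvectorUnitary : Matrix ι ι 𝕜) i j‖ ^ 2 : ℝ) := by
  rw [IsHermitian.cfc, Unitary.conjStarAlgAut_apply, mul_apply, RCLike.ofReal_sum]
  refine sum_congr rfl fun j _ => ?_
  rw [mul_diagonal, star_apply, RCLike.star_def, Function.comp_apply, Function.comp_apply,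
    mul_right_comm, RCLike.mul_conj]
  push_cast
  ring

end Matrix.IsHermitian

theorem Matrix.sq_apply_le_conjTranspose_mul_self_apply {κ ι : Type*} [Fintype κ]
    (M : Matrix κ ι ℝ) (p : κ) (z : ι) : M p z ^ 2 ≤ (Mᴴ * M) z z := by
  rw [mul_apply]
  simp only [conjTranspose_apply, star_trivial, ← sq]
  exact single_le_sum (f := fun α => M α z ^ 2) (fun _ _ => sq_nonneg _) (mem_univ p)

section bMat

variable {m n : ℕ} {a : Matrix (Fin m) (Fin n) ℝ} (hA : (aᴴ * a).IsHermitian)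

theorem bMat_eq_cfc : bMat a = hA.cfc (1 + id) := by
  rw [IsHermitian.cfc_add, IsHermitian.cfc_one, IsHermitian.cfc_id]
  ext i j
  simp [bMat, one_apply, mul_apply]

theorem det_bMat : (bMat a).det = ∏ i, (1 + hA.eigenvalues i) := by
  simp [bMat_eq_cfc hA, IsHermitian.det_cfc]

theorem inv_bMat : (bMat a)⁻¹ = hA.cfc (1 + id)⁻¹ := by
  rw [bMat_eq_cfc hA, IsHermitian.inv_cfc]
  intro i
  have := (posSemidef_conjTranspose_mul_self a).eigenvalues_nonneg i
  simp only [Pi.add_apply, Pi.one_apply, id]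
  positivity

theorem one_le_det_bMat : 1 ≤ (bMat a).det := by
  rw [det_bMat (isHermitian_conjTranspose_mul_self a)]
  exact one_le_prod fun i _ =>
    le_add_of_nonneg_right (eigenvalues_conjTranspose_mul_self_nonneg a i)

theorem sq_xi_le {L t δ : ℝ} (hL : 0 ≤ L) (ht : 0 < t) (htL : 50 * t * (1 + L) ≤ 1)
    (htδ : 50 * t * (1 + L) ≤ δ) (hpair : ∀ i j, i ≠ j → hA.eigenvalues i * hA.eigenvalues j ≤ L)
    (p : Fin m) (z : Fin n) (hdom : (1 - t) * (bMat a).det ≤ a p z ^ 2) :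
    (Real.sqrt (bMat a).det * ∑ i, (bMat a)⁻¹ i z * a p i) ^ 2 ≤ 1 + δ := by
  set γ := hA.eigenvalues
  set w : Fin n → ℝ := fun j => ‖(hA.eigenvectorUnitary : Matrix (Fin n) (Fin n) ℝ) z j‖ ^ 2
  set B := hA.cfc (1 + id)⁻¹
  have hγ : ∀ i, 0 ≤ γ i := (posSemidef_conjTranspose_mul_self a).eigenvalues_nonneg
  have hw1 : ∑ j, w j = 1 := by
    have := hA.cfc_apply_self 1 z
    rw [hA.cfc_one, one_apply_eq] at this
    simpa only [Pi.one_apply, one_mul, RCLike.ofReal_real_eq_id, id] using this.symm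
  have hAzz : (aᴴ * a) z z = ∑ j, γ j * w j := by
    have := hA.cfc_apply_self id z
    rwa [hA.cfc_id, RCLike.ofReal_real_eq_id, id] at this
  have hxi : ∑ i, (bMat a)⁻¹ i z * a p i = (a * B) p z := by
    rw [inv_bMat hA, mul_apply]
    exact sum_congr rfl fun i _ => mul_comm _ _
  have hgram : (a * B)ᴴ * (a * B) = hA.cfc ((1 + id)⁻¹ * id * (1 + id)⁻¹) := by
    rw [conjTranspose_mul, (hA.isHermitian_cfc _).eq, hA.cfc_mul, hA.cfc_mul, hA.cfc_id]
    simp only [Matrix.mul_assoc, B]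
  have hcol : (a * B) p z ^ 2 ≤ ∑ j, γ j / (1 + γ j) ^ 2 * w j := by
    refine (sq_apply_le_conjTranspose_mul_self_apply _ p z).trans_eq ?_
    rw [hgram, hA.cfc_apply_self, RCLike.ofReal_real_eq_id, id]
    refine sum_congr rfl fun j _ => ?_
    simp only [Pi.mul_apply, Pi.inv_apply, Pi.add_apply, Pi.one_apply, id, γ, w]
    rw [div_eq_mul_inv, ← inv_pow]
    ring
  have hdet : 0 ≤ (bMat a).det := zero_le_one.trans one_le_det_bMat
  rw [mul_pow, Real.sq_sqrt hdet, hxi]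
  calc (bMat a).det * (a * B) p z ^ 2 ≤ (bMat a).det * ∑ j, γ j / (1 + γ j) ^ 2 * w j := by
        gcongr
    _ ≤ 1 + δ := by
        rw [det_bMat hA]
        refine prod_one_add_mul_sum_div_sq_le hL ht htL htδ hγ (fun _ => sq_nonneg _) hw1 hpair ?_
        rw [← det_bMat hA, ← hAzz]
        exact hdom.trans (sq_apply_le_conjTranspose_mul_self_apply a p z)

end bMat

theorem eigenvalues_mul_le_sq_of_singVals_mul_le {m n : ℕ} {a : Matrix (Fin m) (Fin n) ℝ}
    {Λ : ℝ} {i j : Fin n} (h : singVals a i * singVals a j ≤ Λ) :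
    (posSemidef_conjTranspose_mul_self a).1.eigenvalues i *
      (posSemidef_conjTranspose_mul_self a).1.eigenvalues j ≤ Λ ^ 2 := by
  have hγ := (posSemidef_conjTranspose_mul_self a).eigenvalues_nonneg
  calc _ = (singVals a i * singVals a j) ^ 2 := by
        rw [singVals, singVals, mul_pow, Real.sq_sqrt (hγ i), Real.sq_sqrt (hγ j)]
    _ ≤ Λ ^ 2 := pow_le_pow_left₀ (mul_nonneg (Real.sqrt_nonneg _) (Real.sqrt_nonneg _)) h 2

/-- **Lemma 9.1 (Appendix I)**. Fix `n ≥ 2`, `m ≥ 1`, `Λ > 0`. For every `δ > 0` there is an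
`ε > 0` such that for every real `m × n` matrix `a` whose singular values satisfy
`λ₁λ₂ ≤ Λ` (encoded by all pairwise products of distinct singular values being `≤ Λ`),
if `a₁₁ ≥ (1 − ε)√(det b)` where `b = Iₙ + aᵀa`, then
`|ξ₁₁| = |√(det b) · Σᵢ b^{i1} a_{1i}| ≤ 1 + δ`. -/
theorem xi_estimate
    (n m : ℕ) (hn : 2 ≤ n) (hm : 1 ≤ m) (Λ : ℝ)
    (δ : ℝ) (hδ : 0 < δ) :
    ∃ ε : ℝ, 0 < ε ∧
      ∀ a : Matrix (Fin m) (Fin n) ℝ,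
        (∀ i j : Fin n, i ≠ j → singVals a i * singVals a j ≤ Λ) →
        (1 - ε) * Real.sqrt (bMat a).det ≤ a ⟨0, by omega⟩ ⟨0, by omega⟩ →
        |Real.sqrt (bMat a).det *
            ∑ i : Fin n, (bMat a)⁻¹ i ⟨0, by omega⟩ * a ⟨0, by omega⟩ i| ≤ 1 + δ := by
  refine ⟨min δ 1 / (100 * (1 + Λ ^ 2)), by positivity, fun a hsing hdom => ?_⟩
  set ε := min δ 1 / (100 * (1 + Λ ^ 2))
  have hε : 50 * (2 * ε) * (1 + Λ ^ 2) = min δ 1 := by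
    simp only [ε]; field_simp; norm_num
  have hε1 : ε ≤ 1 := by nlinarith [min_le_right δ 1, sq_nonneg Λ]
  have hdet := zero_le_one.trans (one_le_det_bMat (a := a))
  have hdom2 : (1 - 2 * ε) * (bMat a).det ≤ a ⟨0, by omega⟩ ⟨0, by omega⟩ ^ 2 :=
    calc (1 - 2 * ε) * (bMat a).det ≤ ((1 - ε) * Real.sqrt (bMat a).det) ^ 2 := by
          rw [mul_pow, Real.sq_sqrt hdet]; nlinarith [sq_nonneg ε]
      _ ≤ _ := pow_le_pow_left₀ (by have := Real.sqrt_nonneg (bMat a).det; nlinarith) hdom 2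
  have hxi := sq_xi_le (posSemidef_conjTranspose_mul_self a).1 (sq_nonneg Λ) (by positivity)
    (hε ▸ min_le_right δ 1) (hε ▸ min_le_left δ 1)
    (fun i j hij => eigenvalues_mul_le_sq_of_singVals_mul_le (hsing i j hij)) _ _ hdom2
  exact abs_le_of_sq_le_sq (hxi.trans (by nlinarith)) (by linarith)
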